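/- arXiv:2102.01540 — 2 statements merged into one kernel-verified Lean document; each statement's English description precedes it below -/
import Mathlib

section
/- Let v ∈ V and suppose v has a neighbor u with N(u) \ N[v] = ∅ (i.e., N(u) ⊆ N[v]). Then there exists a maximum independent set of G that does not contain v. -/
/-! If `N(u) ⊆ N[v]` for a neighbour `u` of `v`, then in any independent set containing `v`
every other member lies outside `N[v]`, hence outside `N(u)`, so `v` may be swapped for `u`
without changing the size. Applied to a maximum independent set this gives one avoiding `v`. -/

variable {V : Type*} [Fintype V] [DecidableEq V]

def IsIndep (G : SimpleGraph V) (I : Finset V) : Prop :=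
  ∀ u ∈ I, ∀ v ∈ I, ¬ G.Adj u v

def IsMaxIndep (G : SimpleGraph V) (I : Finset V) : Prop :=
  IsIndep G I ∧ ∀ J : Finset V, IsIndep G J → J.card ≤ I.card

section

variable {G : SimpleGraph V}

omit [Fintype V] [DecidableEq V] in
theorem IsIndep.subset {I J : Finset V} (hI : IsIndep G I) (hJI : J ⊆ I) : IsIndep G J :=
  fun a ha b hb => hI a (hJI ha) b (hJI hb)

omit [Fintype V] in
theorem IsIndep.insert_of_forall_not_adj {I : Finset V} {u : V} (hI : IsIndep G I)
    (hu : ∀ b ∈ I, ¬ G.Adj u b) : IsIndep G (insert u I) := by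
  intro a ha b hb hab
  rcases Finset.mem_insert.mp ha with rfl | haI <;> rcases Finset.mem_insert.mp hb with rfl | hbI
  · exact G.irrefl hab
  · exact hu b hbI hab
  · exact hu a haI hab.symm
  · exact hI a haI b hbI hab

omit [DecidableEq V] in
theorem exists_isMaxIndep (G : SimpleGraph V) : ∃ I : Finset V, IsMaxIndep G I := by
  classical
  obtain ⟨I, hI, hmax⟩ := Finset.exists_max_image
    (Finset.univ.filter (IsIndep G)) Finset.card
    ⟨∅, Finset.mem_filter.mpr ⟨Finset.mem_univ _, by simp [IsIndep]⟩⟩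
  exact ⟨I, (Finset.mem_filter.mp hI).2,
    fun J hJ => hmax J (Finset.mem_filter.mpr ⟨Finset.mem_univ _, hJ⟩)⟩

omit [Fintype V] [DecidableEq V] in
theorem IsMaxIndep.of_card_eq {I J : Finset V} (hI : IsMaxIndep G I) (hJ : IsIndep G J)
    (hcard : J.card = I.card) : IsMaxIndep G J :=
  ⟨hJ, fun K hK => hcard ▸ hI.2 K hK⟩

theorem IsIndep.not_adj_of_neighborFinset_subset [DecidableRel G.Adj] {I : Finset V}
    {u v : V} (hI : IsIndep G I) (hv : v ∈ I)
    (hsub : G.neighborFinset u ⊆ insert v (G.neighborFinset v)) :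
    ∀ b ∈ I.erase v, ¬ G.Adj u b := by
  intro b hb hub
  obtain ⟨hbv, hbI⟩ := Finset.mem_erase.mp hb
  rcases Finset.mem_insert.mp (hsub ((G.mem_neighborFinset u b).mpr hub)) with rfl | hvb
  · exact hbv rfl
  · exact hI v hv b hbI ((G.mem_neighborFinset v b).mp hvb)

theorem IsMaxIndep.exchange [DecidableRel G.Adj] {I : Finset V} {u v : V}
    (hI : IsMaxIndep G I) (hv : v ∈ I) (huv : G.Adj u v)
    (hsub : G.neighborFinset u ⊆ insert v (G.neighborFinset v)) :
    IsMaxIndep G (insert u (I.erase v)) := by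
  have huI : u ∉ I.erase v := fun hu => hI.1 u (Finset.mem_of_mem_erase hu) v hv huv
  refine hI.of_card_eq ((hI.1.subset (Finset.erase_subset v I)).insert_of_forall_not_adj
    (hI.1.not_adj_of_neighborFinset_subset hv hsub)) ?_
  rw [Finset.card_insert_of_notMem huI, Finset.card_erase_add_one hv]

end

theorem unconfined_first_step (G : SimpleGraph V) [DecidableRel G.Adj] (u v : V)
    (huv : G.Adj u v)
    (hsub : G.neighborFinset u ⊆ insert v (G.neighborFinset v)) :
    ∃ I : Finset V, IsMaxIndep G I ∧ v ∉ I := by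
  obtain ⟨I, hI⟩ := exists_isMaxIndep G
  by_cases hv : v ∈ I
  · refine ⟨insert u (I.erase v), hI.exchange hv huv hsub, fun hvI => ?_⟩
    rcases Finset.mem_insert.mp hvI with hvu | hvI
    · exact G.ne_of_adj huv hvu.symm
    · exact Finset.notMem_erase v I hvI
  · exact ⟨I, hI, hv⟩
end

section
/- Let v be a vertex of G, and suppose every maximum independent set of G contains v. If u is a neighbor of v such that every other neighbor of u is adjacent to v except exactly one vertex w (i.e., N(u) \ N[v] = {w}), then every maximum independent set of G contains w. -/
variable {V : Type*} [Fintype V] [DecidableEq V]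

/-!
Let `I` be a maximum independent set; it contains `v`, so it misses `N(v)`. If it also missed `w`,
then `N(u) ∩ I ⊆ {v}`, and exchanging `v` for `u` would give a maximum independent set avoiding `v`.
-/

section

variable {α : Type*} {G : SimpleGraph α} {I : Finset α} {u v : α}

theorem IsMaxIndep.of_card_le {J : Finset α} (hI : IsMaxIndep G I) (hJ : IsIndep G J)
    (hcard : I.card ≤ J.card) : IsMaxIndep G J :=
  ⟨hJ, fun K hK => (hI.2 K hK).trans hcard⟩

variable [DecidableEq α]

theorem IsIndep.erase (hI : IsIndep G I) (v : α) : IsIndep G (I.erase v) :=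
  fun a ha b hb => hI a (Finset.mem_of_mem_erase ha) b (Finset.mem_of_mem_erase hb)

theorem IsIndep.insert (hI : IsIndep G I) (hu : ∀ b ∈ I, ¬ G.Adj u b) :
    IsIndep G (insert u I) := by
  simp only [IsIndep, Finset.mem_insert, forall_eq_or_imp, G.irrefl, not_false_eq_true, true_and]
  exact ⟨hu, fun a ha => ⟨fun hau => hu a ha hau.symm, hI a ha⟩⟩

theorem IsMaxIndep.insert_erase (hI : IsMaxIndep G I) (hv : v ∈ I) (hu : u ∉ I)
    (hfree : ∀ b ∈ I.erase v, ¬ G.Adj u b) : IsMaxIndep G (insert u (I.erase v)) := by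
  refine hI.of_card_le ((hI.1.erase v).insert hfree) ?_
  rw [Finset.card_insert_of_notMem fun h => hu (Finset.mem_of_mem_erase h),
    Finset.card_erase_add_one hv]

end

theorem unconfined_invariant (G : SimpleGraph V) [DecidableRel G.Adj] (u v w : V)
    (hv : ∀ I : Finset V, IsMaxIndep G I → v ∈ I)
    (huv : G.Adj u v)
    (hw : G.neighborFinset u \ insert v (G.neighborFinset v) = {w}) :
    ∀ I : Finset V, IsMaxIndep G I → w ∈ I := by
  intro I hI
  by_contra hwI
  have hvI : v ∈ I := hv I hI
  have huI : u ∉ I := fun huI => hI.1 u huI v hvI huv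
  have hfree : ∀ b ∈ I.erase v, ¬ G.Adj u b := by
    intro b hb hub
    obtain ⟨hbv, hbI⟩ := Finset.mem_erase.mp hb
    have hb_new : b ∈ G.neighborFinset u \ insert v (G.neighborFinset v) := by
      simp only [Finset.mem_sdiff, Finset.mem_insert, SimpleGraph.mem_neighborFinset, not_or]
      exact ⟨hub, hbv, hI.1 v hvI b hbI⟩
    rw [hw, Finset.mem_singleton] at hb_new
    exact hwI (hb_new ▸ hbI)
  have hvJ := hv _ (hI.insert_erase hvI huI hfree)
  rcases Finset.mem_insert.mp hvJ with hvu | hvJ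
  · exact huv.ne hvu.symm
  · exact Finset.notMem_erase v I hvJ
end
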